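/- Let A, B be n×n positive semi-definite matrices and let p ≥ 2. Then λ_k↓(((A+B)/2)^p) ≤ λ_k↓((A^p + B^p)/2) for all k = 1,…,n. -/

import Mathlib

open Matrix
open scoped ComplexOrder

/-- A function `f : [0,∞) → ℝ` is superquadratic if for every `t ≥ 0` there is a constant
`C` with `f s ≥ f t + C * (s - t) + f |s - t|` for all `s ≥ 0`. -/
def Superquadratic (f : ℝ → ℝ) : Prop :=
  ∀ t : ℝ, 0 ≤ t → ∃ C : ℝ, ∀ s : ℝ, 0 ≤ s → f t + C * (s - t) + f |s - t| ≤ f s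

/-- Apply a real function to a matrix via the functional calculus (junk value `0` if the
matrix is not Hermitian). -/
noncomputable def mfun {n : ℕ} (f : ℝ → ℝ) (A : Matrix (Fin n) (Fin n) ℂ) :
    Matrix (Fin n) (Fin n) ℂ :=
  if h : A.IsHermitian then h.cfc f else 0

/-- `|A| = √(Aᴴ A)`. -/
noncomputable def matAbs {n : ℕ} (A : Matrix (Fin n) (Fin n) ℂ) : Matrix (Fin n) (Fin n) ℂ :=
  ((Matrix.posSemidef_conjTranspose_mul_self A).1.eigenvectorUnitary : Matrix (Fin n) (Fin n) ℂ) *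
    diagonal ((↑) ∘ (√·) ∘ (Matrix.posSemidef_conjTranspose_mul_self A).1.eigenvalues) *
    (star (Matrix.posSemidef_conjTranspose_mul_self A).1.eigenvectorUnitary : Matrix (Fin n) (Fin n) ℂ)

/-- Largest eigenvalue of a Hermitian matrix (junk value `0` otherwise). -/
noncomputable def lmax {n : ℕ} (A : Matrix (Fin n) (Fin n) ℂ) : ℝ :=
  if h : A.IsHermitian then ⨆ i, h.eigenvalues i else 0

/-- Smallest eigenvalue of a Hermitian matrix (junk value `0` otherwise). -/
noncomputable def lmin {n : ℕ} (A : Matrix (Fin n) (Fin n) ℂ) : ℝ :=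
  if h : A.IsHermitian then ⨅ i, h.eigenvalues i else 0

/-- `k`-th largest eigenvalue (`k = 0` gives the largest) of a Hermitian matrix
(junk value `0` otherwise). -/
noncomputable def lkth {n : ℕ} (A : Matrix (Fin n) (Fin n) ℂ) (k : Fin n) : ℝ :=
  if h : A.IsHermitian then (h.eigenvalues ∘ Tuple.sort h.eigenvalues) k.rev else 0

/-- The quadratic form `⟨Ax, x⟩` as a complex number. -/
noncomputable def qf {n : ℕ} (A : Matrix (Fin n) (Fin n) ℂ) (x : Fin n → ℂ) : ℂ :=
  star x ⬝ᵥ A *ᵥ x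

/-- Löwner order: `A ⊑ B` iff `B - A` is positive semidefinite. -/
def Loewner {n : ℕ} (A B : Matrix (Fin n) (Fin n) ℂ) : Prop :=
  (B - A).PosSemidef


section Aux

variable {n : ℕ}

noncomputable def nsq (x : Fin n → ℂ) : ℝ := ∑ i, Complex.normSq (x i)

lemma qf_conj_diag (U : Matrix (Fin n) (Fin n) ℂ) (v : Fin n → ℝ) (x : Fin n → ℂ) :
    star x ⬝ᵥ (U * diagonal (RCLike.ofReal ∘ v) * star U) *ᵥ x =
      ((∑ i, v i * Complex.normSq ((star U *ᵥ x) i) : ℝ) : ℂ) := by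
  have h : star (star U *ᵥ x) = star x ᵥ* U := by
    rw [star_mulVec, star_eq_conjTranspose, conjTranspose_conjTranspose]
  rw [← mulVec_mulVec, ← mulVec_mulVec, dotProduct_mulVec, ← h]
  set y := star U *ᵥ x with hy
  simp only [dotProduct, mulVec_diagonal, Complex.ofReal_sum, Pi.star_apply]
  refine Finset.sum_congr rfl fun i _ => ?_
  simp only [Function.comp_apply, RCLike.star_def, Complex.ofReal_mul,
    Complex.normSq_eq_conj_mul_self]
  exact mul_left_comm ((starRingEnd ℂ) (y i)) ((v i : ℂ)) (y i)

section herm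
variable {H : Matrix (Fin n) (Fin n) ℂ} (hH : H.IsHermitian)

lemma qf_cfc (g : ℝ → ℝ) (x : Fin n → ℂ) :
    star x ⬝ᵥ hH.cfc g *ᵥ x =
      ((∑ i, g (hH.eigenvalues i) *
        Complex.normSq ((star (hH.eigenvectorUnitary : Matrix (Fin n) (Fin n) ℂ) *ᵥ x) i) : ℝ) : ℂ) := by
  rw [Matrix.IsHermitian.cfc]
  exact qf_conj_diag _ (g ∘ hH.eigenvalues) x

lemma qf_herm (x : Fin n → ℂ) :
    star x ⬝ᵥ H *ᵥ x =
      ((∑ i, hH.eigenvalues i *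
        Complex.normSq ((star (hH.eigenvectorUnitary : Matrix (Fin n) (Fin n) ℂ) *ᵥ x) i) : ℝ) : ℂ) := by
  conv_lhs => rw [hH.spectral_theorem]
  exact qf_conj_diag _ hH.eigenvalues x

lemma sum_normSq_eigCoords (x : Fin n → ℂ) :
    ∑ i, Complex.normSq ((star (hH.eigenvectorUnitary : Matrix (Fin n) (Fin n) ℂ) *ᵥ x) i)
      = nsq x := by
  have h1 := qf_conj_diag (hH.eigenvectorUnitary : Matrix (Fin n) (Fin n) ℂ) (fun _ => 1) x
  have h2 : (hH.eigenvectorUnitary : Matrix (Fin n) (Fin n) ℂ) *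
      diagonal (RCLike.ofReal ∘ fun _ => (1:ℝ)) *
      star (hH.eigenvectorUnitary : Matrix (Fin n) (Fin n) ℂ) = 1 := by
    have : diagonal (RCLike.ofReal ∘ fun _ => (1:ℝ)) = (1 : Matrix (Fin n) (Fin n) ℂ) := by
      have : (Complex.ofReal ∘ fun _ : Fin n => (1:ℝ)) = fun _ => (1:ℂ) := by
        funext i; simp
      rw [show (RCLike.ofReal ∘ fun _ : Fin n => (1:ℝ)) = (Complex.ofReal ∘ fun _ : Fin n => (1:ℝ)) from rfl, this, diagonal_one]
    rw [this, mul_one]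
    exact (Matrix.mem_unitaryGroup_iff).mp hH.eigenvectorUnitary.2
  rw [h2] at h1
  have h3 : star x ⬝ᵥ (1 : Matrix (Fin n) (Fin n) ℂ) *ᵥ x = ((nsq x : ℝ) : ℂ) := by
    rw [one_mulVec]
    simp only [dotProduct, nsq, Complex.ofReal_sum, Pi.star_apply, RCLike.star_def,
      Complex.normSq_eq_conj_mul_self]
  rw [h3] at h1
  have := Complex.ofReal_injective h1
  simpa using this.symm

lemma cfc_id_eq : hH.cfc id = H := by
  rw [Matrix.IsHermitian.cfc]
  exact (hH.spectral_theorem).symm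


noncomputable def eigCol (i : Fin n) : Fin n → ℂ :=
  Matrix.mulVecLin (hH.eigenvectorUnitary : Matrix (Fin n) (Fin n) ℂ) (Pi.single i 1)

noncomputable def eigSpan (s : Finset (Fin n)) : Submodule ℂ (Fin n → ℂ) :=
  Submodule.span ℂ (Set.range fun i : s => eigCol hH (i : Fin n))

lemma mulVecLin_star_inj :
    LinearMap.ker (Matrix.mulVecLin (hH.eigenvectorUnitary : Matrix (Fin n) (Fin n) ℂ)) = ⊥ := by
  rw [LinearMap.ker_eq_bot]
  intro a b hab
  have h := congrArg (fun z => star (hH.eigenvectorUnitary : Matrix (Fin n) (Fin n) ℂ) *ᵥ z) hab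
  simpa [Matrix.mulVecLin_apply, Matrix.mulVec_mulVec,
    (Matrix.mem_unitaryGroup_iff').mp hH.eigenvectorUnitary.2] using h

lemma eigCol_linearIndependent : LinearIndependent ℂ (eigCol hH) := by
  have h1 : LinearIndependent ℂ (fun i : Fin n => Pi.single i (1:ℂ)) := by
    have := (Pi.basisFun ℂ (Fin n)).linearIndependent
    convert this using 1
    funext i
    simp [Pi.basisFun_apply]
  exact h1.map' _ (mulVecLin_star_inj hH)

lemma finrank_eigSpan (s : Finset (Fin n)) :
    Module.finrank ℂ (eigSpan hH s) = s.card := by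
  rw [eigSpan, show (fun i : s => eigCol hH (i : Fin n)) = eigCol hH ∘ (Subtype.val : s → Fin n) from rfl,
    finrank_span_eq_card ((eigCol_linearIndependent hH).comp
    (Subtype.val : s → Fin n) Subtype.val_injective)]
  exact Fintype.card_coe s

lemma eigSpan_support {s : Finset (Fin n)} {x : Fin n → ℂ} (hx : x ∈ eigSpan hH s)
    {j : Fin n} (hj : j ∉ s) :
    (star (hH.eigenvectorUnitary : Matrix (Fin n) (Fin n) ℂ) *ᵥ x) j = 0 := by
  rw [eigSpan, Submodule.mem_span_range_iff_exists_fun] at hx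
  obtain ⟨c, hc⟩ := hx
  have : star (hH.eigenvectorUnitary : Matrix (Fin n) (Fin n) ℂ) *ᵥ x
      = ∑ i : s, c i • (Pi.single (i : Fin n) (1:ℂ) : Fin n → ℂ) := by
    rw [← hc]
    rw [show (star (hH.eigenvectorUnitary : Matrix (Fin n) (Fin n) ℂ) *ᵥ
      ∑ i : s, c i • eigCol hH (i : Fin n)) = Matrix.mulVecLin
      (star (hH.eigenvectorUnitary : Matrix (Fin n) (Fin n) ℂ)) (∑ i : s, c i • eigCol hH (i : Fin n)) from rfl]
    rw [map_sum]
    refine Finset.sum_congr rfl fun i _ => ?_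
    rw [_root_.map_smul]
    congr 1
    simp only [eigCol, Matrix.mulVecLin_apply, Matrix.mulVec_mulVec,
      (Matrix.mem_unitaryGroup_iff').mp hH.eigenvectorUnitary.2, Matrix.one_mulVec]
  rw [this]
  simp only [Finset.sum_apply, Pi.smul_apply]
  refine Finset.sum_eq_zero fun i _ => ?_
  have : (i : Fin n) ≠ j := fun h => hj (h ▸ i.2)
  rw [Pi.single_apply, if_neg (Ne.symm this)]
  simp


lemma nsq_nonneg (x : Fin n → ℂ) : 0 ≤ nsq x :=
  Finset.sum_nonneg fun i _ => Complex.normSq_nonneg _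

lemma nsq_pos {x : Fin n → ℂ} (hx : x ≠ 0) : 0 < nsq x := by
  obtain ⟨i, hi⟩ : ∃ i, x i ≠ 0 := by
    by_contra h
    push_neg at h
    exact hx (funext h)
  exact Finset.sum_pos' (fun j _ => Complex.normSq_nonneg _)
    ⟨i, Finset.mem_univ _, Complex.normSq_pos.2 hi⟩

lemma nsq_smul (c : ℂ) (x : Fin n → ℂ) : nsq (c • x) = Complex.normSq c * nsq x := by
  simp [nsq, Finset.mul_sum, Complex.normSq_mul]

/-- upper bound for qf of `cfc g` on an eigenspan. -/
lemma eigSpan_qf_le {g : ℝ → ℝ} {s : Finset (Fin n)} {b : ℝ}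
    (hb : ∀ i ∈ s, g (hH.eigenvalues i) ≤ b) {x : Fin n → ℂ}
    (hx : x ∈ eigSpan hH s) (hn : nsq x = 1) :
    Complex.re (star x ⬝ᵥ hH.cfc g *ᵥ x) ≤ b := by
  rw [qf_cfc hH g x, Complex.ofReal_re]
  calc ∑ i, g (hH.eigenvalues i) *
        Complex.normSq ((star (hH.eigenvectorUnitary : Matrix (Fin n) (Fin n) ℂ) *ᵥ x) i)
      ≤ ∑ i, b * Complex.normSq ((star (hH.eigenvectorUnitary : Matrix (Fin n) (Fin n) ℂ) *ᵥ x) i) := by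
        refine Finset.sum_le_sum fun i _ => ?_
        by_cases hi : i ∈ s
        · exact mul_le_mul_of_nonneg_right (hb i hi) (Complex.normSq_nonneg _)
        · rw [eigSpan_support hH hx hi]; simp
    _ = b := by rw [← Finset.mul_sum, sum_normSq_eigCoords hH, hn, mul_one]

/-- lower bound for qf of `cfc g` on an eigenspan. -/
lemma eigSpan_qf_ge {g : ℝ → ℝ} {s : Finset (Fin n)} {a : ℝ}
    (ha : ∀ i ∈ s, a ≤ g (hH.eigenvalues i)) {x : Fin n → ℂ}
    (hx : x ∈ eigSpan hH s) (hn : nsq x = 1) :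
    a ≤ Complex.re (star x ⬝ᵥ hH.cfc g *ᵥ x) := by
  rw [qf_cfc hH g x, Complex.ofReal_re]
  calc a = ∑ i, a * Complex.normSq ((star (hH.eigenvectorUnitary : Matrix (Fin n) (Fin n) ℂ) *ᵥ x) i) := by
        rw [← Finset.mul_sum, sum_normSq_eigCoords hH, hn, mul_one]
    _ ≤ _ := by
        refine Finset.sum_le_sum fun i _ => ?_
        by_cases hi : i ∈ s
        · exact mul_le_mul_of_nonneg_right (ha i hi) (Complex.normSq_nonneg _)
        · rw [eigSpan_support hH hx hi]; simp

lemma exists_unit_mem_inf {S T : Submodule ℂ (Fin n → ℂ)}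
    (h : n + 1 ≤ Module.finrank ℂ S + Module.finrank ℂ T) :
    ∃ x : Fin n → ℂ, nsq x = 1 ∧ x ∈ S ∧ x ∈ T := by
  have hd : 0 < Module.finrank ℂ (S ⊓ T : Submodule ℂ (Fin n → ℂ)) := by
    have h1 := Submodule.finrank_sup_add_finrank_inf_eq S T
    have h2 : Module.finrank ℂ (S ⊔ T : Submodule ℂ (Fin n → ℂ)) ≤ n := by
      simpa [Module.finrank_fintype_fun_eq_card] using
        (Submodule.finrank_le (S ⊔ T : Submodule ℂ (Fin n → ℂ)))
    omega
  obtain ⟨⟨x, hxST⟩, hx0⟩ := Module.finrank_pos_iff_exists_ne_zero.mp hd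
  have hx0' : x ≠ 0 := by
    intro h0
    exact hx0 (Subtype.ext h0)
  set t : ℂ := (((Real.sqrt (nsq x))⁻¹ : ℝ) : ℂ)
  refine ⟨t • x, ?_, Submodule.smul_mem S t hxST.1, Submodule.smul_mem T t hxST.2⟩
  rw [nsq_smul]
  have hpos := nsq_pos hx0'
  have : Complex.normSq t = (nsq x)⁻¹ := by
    simp only [t, Complex.normSq_ofReal]
    rw [← Real.sqrt_inv, Real.mul_self_sqrt (inv_nonneg.2 hpos.le)]
  rw [this, inv_mul_cancel₀ (ne_of_gt hpos)]

/-- Courant–Fischer upper bound: any subspace of dim ≥ r+1 on which the quadratic form is ≤ c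
bounds the r-th smallest-sorted eigenvalue. -/
lemma cf_upper {c : ℝ} (r : Fin n) (T : Submodule ℂ (Fin n → ℂ))
    (hT : (r : ℕ) + 1 ≤ Module.finrank ℂ T)
    (h : ∀ x ∈ T, nsq x = 1 → Complex.re (star x ⬝ᵥ H *ᵥ x) ≤ c) :
    (hH.eigenvalues ∘ Tuple.sort hH.eigenvalues) r ≤ c := by
  set σ := Tuple.sort hH.eigenvalues with hσ
  set s : Finset (Fin n) := (Finset.Ici r).image σ with hs
  have hcard : s.card = n - (r : ℕ) := by
    rw [hs, Finset.card_image_of_injective _ (Equiv.injective σ), Fin.card_Ici]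
  have hdim : n + 1 ≤ Module.finrank ℂ (eigSpan hH s) + Module.finrank ℂ T := by
    rw [finrank_eigSpan, hcard]
    have := r.isLt
    omega
  obtain ⟨x, hx1, hxS, hxT⟩ := exists_unit_mem_inf hdim
  refine le_trans ?_ (h x hxT hx1)
  have hHx : Complex.re (star x ⬝ᵥ H *ᵥ x) = Complex.re (star x ⬝ᵥ hH.cfc id *ᵥ x) := by
    rw [cfc_id_eq]
  rw [hHx]
  refine eigSpan_qf_ge hH ?_ hxS hx1
  intro i hi
  rw [hs, Finset.mem_image] at hi
  obtain ⟨j, hj, rfl⟩ := hi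
  exact Tuple.monotone_sort hH.eigenvalues (Finset.mem_Ici.mp hj)

/-- Courant–Fischer lower bound. -/
lemma cf_lower {c : ℝ} (r : Fin n) (S : Submodule ℂ (Fin n → ℂ))
    (hS : n ≤ Module.finrank ℂ S + (r : ℕ))
    (h : ∀ x ∈ S, nsq x = 1 → c ≤ Complex.re (star x ⬝ᵥ H *ᵥ x)) :
    c ≤ (hH.eigenvalues ∘ Tuple.sort hH.eigenvalues) r := by
  set σ := Tuple.sort hH.eigenvalues with hσ
  set s : Finset (Fin n) := (Finset.Iic r).image σ with hs
  have hcard : s.card = (r : ℕ) + 1 := by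
    rw [hs, Finset.card_image_of_injective _ (Equiv.injective σ), Fin.card_Iic]
  have hdim : n + 1 ≤ Module.finrank ℂ S + Module.finrank ℂ (eigSpan hH s) := by
    rw [finrank_eigSpan, hcard]
    omega
  obtain ⟨x, hx1, hxS, hxT⟩ := exists_unit_mem_inf hdim
  refine le_trans (h x hxS hx1) ?_
  have hHx : Complex.re (star x ⬝ᵥ H *ᵥ x) = Complex.re (star x ⬝ᵥ hH.cfc id *ᵥ x) := by
    rw [cfc_id_eq]
  rw [hHx]
  refine eigSpan_qf_le hH ?_ hxT hx1
  intro i hi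
  rw [hs, Finset.mem_image] at hi
  obtain ⟨j, hj, rfl⟩ := hi
  exact Tuple.monotone_sort hH.eigenvalues (Finset.mem_Iic.mp hj)

lemma cfc_isHermitian (g : ℝ → ℝ) : (hH.cfc g).IsHermitian := by
  rw [Matrix.IsHermitian.cfc]
  have hD : (diagonal (RCLike.ofReal ∘ g ∘ hH.eigenvalues) : Matrix (Fin n) (Fin n) ℂ)ᴴ
      = diagonal (RCLike.ofReal ∘ g ∘ hH.eigenvalues) := by
    simp [Matrix.diagonal_conjTranspose, Pi.star_def, Complex.conj_ofReal]
  simp only [Unitary.conjStarAlgAut_apply]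
  show _ = _
  rw [conjTranspose_mul, conjTranspose_mul, hD, ← star_eq_conjTranspose,
    ← star_eq_conjTranspose, star_star, Matrix.mul_assoc]

end herm

lemma herm_half_smul {M : Matrix (Fin n) (Fin n) ℂ} (h : M.IsHermitian) :
    ((2:ℂ)⁻¹ • M).IsHermitian := by
  show _ = _
  rw [conjTranspose_smul, h]
  congr 1
  simp

lemma qf_half_smul (P Q : Matrix (Fin n) (Fin n) ℂ) (x : Fin n → ℂ) :
    Complex.re (star x ⬝ᵥ ((2:ℂ)⁻¹ • (P + Q)) *ᵥ x) =
      2⁻¹ * (Complex.re (star x ⬝ᵥ P *ᵥ x) + Complex.re (star x ⬝ᵥ Q *ᵥ x)) := by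
  rw [smul_mulVec, dotProduct_smul, add_mulVec, dotProduct_add]
  rw [show ((2:ℂ)⁻¹) = (((2:ℝ)⁻¹ : ℝ) : ℂ) by norm_num, smul_eq_mul,
    Complex.re_ofReal_mul, Complex.add_re]

/-- Jensen's inequality for the quadratic form of a PSD matrix. -/
lemma jensen_qf {H : Matrix (Fin n) (Fin n) ℂ} (hH : H.PosSemidef) {f : ℝ → ℝ}
    (hf : ConvexOn ℝ (Set.Ici 0) f) {x : Fin n → ℂ} (hx : nsq x = 1) :
    f (Complex.re (star x ⬝ᵥ H *ᵥ x)) ≤ Complex.re (star x ⬝ᵥ hH.1.cfc f *ᵥ x) := by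
  have h1 := qf_herm hH.1 x
  have h2 := qf_cfc hH.1 f x
  set w : Fin n → ℝ := fun i =>
    Complex.normSq ((star (hH.1.eigenvectorUnitary : Matrix (Fin n) (Fin n) ℂ) *ᵥ x) i) with hw
  have hsum : ∑ i, w i = 1 := by rw [hw]; simp only; rw [sum_normSq_eigCoords hH.1, hx]
  rw [h1, h2, Complex.ofReal_re, Complex.ofReal_re]
  have key := hf.map_sum_le (t := Finset.univ) (w := w) (p := hH.1.eigenvalues)
    (fun i _ => Complex.normSq_nonneg _) hsum
    (fun i _ => Set.mem_Ici.mpr (hH.eigenvalues_nonneg i))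
  calc f (∑ i, hH.1.eigenvalues i * w i)
      = f (∑ i, w i • hH.1.eigenvalues i) := by
        congr 1; exact Finset.sum_congr rfl fun i _ => (mul_comm _ _)
    _ ≤ ∑ i, w i • f (hH.1.eigenvalues i) := key
    _ = ∑ i, f (hH.1.eigenvalues i) * w i :=
        Finset.sum_congr rfl fun i _ => (mul_comm _ _)

lemma psd_half_sum {A B : Matrix (Fin n) (Fin n) ℂ} (hA : A.PosSemidef) (hB : B.PosSemidef) :
    ((2:ℂ)⁻¹ • (A + B)).PosSemidef := by
  have h2 : (0:ℂ) ≤ (2:ℂ)⁻¹ := by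
    rw [show ((2:ℂ)⁻¹) = (((2:ℝ)⁻¹ : ℝ) : ℂ) by norm_num]
    exact_mod_cast (by norm_num : (0:ℝ) ≤ 2⁻¹)
  exact (hA.add hB).smul h2


end Aux

/-- power-mean eigenvalue inequality for `p ≥ 2`. -/
theorem power_mean_eigenvalue {n : ℕ} (p : ℝ) (hp : 2 ≤ p)
    (A B : Matrix (Fin n) (Fin n) ℂ) (hA : A.PosSemidef) (hB : B.PosSemidef) (k : Fin n) :
    lkth (mfun (fun x => Real.rpow x p) ((2 : ℂ)⁻¹ • (A + B))) k ≤
      lkth ((2 : ℂ)⁻¹ • (mfun (fun x => Real.rpow x p) A + mfun (fun x => Real.rpow x p) B))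
        k := by
  have hp1 : (1:ℝ) ≤ p := by linarith
  have hp0 : (0:ℝ) ≤ p := by linarith
  have hconv : ConvexOn ℝ (Set.Ici 0) (fun x : ℝ => Real.rpow x p) := by
    simpa [Real.rpow_natCast] using convexOn_rpow hp1
  have hC : ((2:ℂ)⁻¹ • (A + B)).PosSemidef := psd_half_sum hA hB
  have hMdef : mfun (fun x => Real.rpow x p) ((2:ℂ)⁻¹ • (A + B)) = hC.1.cfc (fun x => Real.rpow x p) :=
    dif_pos hC.1
  have hPdef : mfun (fun x => Real.rpow x p) A = hA.1.cfc (fun x => Real.rpow x p) := dif_pos hA.1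
  have hQdef : mfun (fun x => Real.rpow x p) B = hB.1.cfc (fun x => Real.rpow x p) := dif_pos hB.1
  have hM : (mfun (fun x => Real.rpow x p) ((2:ℂ)⁻¹ • (A + B))).IsHermitian := by
    rw [hMdef]; exact cfc_isHermitian hC.1 _
  have hPh : (mfun (fun x => Real.rpow x p) A).IsHermitian := by
    rw [hPdef]; exact cfc_isHermitian hA.1 _
  have hQh : (mfun (fun x => Real.rpow x p) B).IsHermitian := by
    rw [hQdef]; exact cfc_isHermitian hB.1 _
  have hNh : ((2:ℂ)⁻¹ • (mfun (fun x => Real.rpow x p) A + mfun (fun x => Real.rpow x p) B)).IsHermitian :=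
    herm_half_smul (hPh.add hQh)
  set σ : Equiv.Perm (Fin n) := Tuple.sort hC.1.eigenvalues with hσ
  set r : Fin n := k.rev with hr
  set μ : ℝ := (hC.1.eigenvalues ∘ σ) r with hμ
  have hμ0 : 0 ≤ μ := hC.eigenvalues_nonneg _
  -- Step A : lkth M k ≤ μ ^ p
  have stepA : lkth (mfun (fun x => Real.rpow x p) ((2:ℂ)⁻¹ • (A + B))) k ≤ Real.rpow μ p := by
    rw [lkth, dif_pos hM]
    refine cf_upper hM r (eigSpan hC.1 ((Finset.Iic r).image σ)) ?_ ?_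
    · rw [finrank_eigSpan, Finset.card_image_of_injective _ (Equiv.injective σ), Fin.card_Iic]
    · intro x hx hx1
      rw [show (star x ⬝ᵥ mfun (fun x => Real.rpow x p) ((2:ℂ)⁻¹ • (A + B)) *ᵥ x)
        = star x ⬝ᵥ hC.1.cfc (fun x => Real.rpow x p) *ᵥ x by rw [hMdef]]
      refine eigSpan_qf_le hC.1 ?_ hx hx1
      intro i hi
      obtain ⟨j, hj, rfl⟩ := Finset.mem_image.mp hi
      exact Real.rpow_le_rpow (hC.eigenvalues_nonneg _)
        (Tuple.monotone_sort hC.1.eigenvalues (Finset.mem_Iic.mp hj)) hp0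
  -- Step B : μ ^ p ≤ lkth N k
  have stepB : Real.rpow μ p ≤
      lkth ((2:ℂ)⁻¹ • (mfun (fun x => Real.rpow x p) A + mfun (fun x => Real.rpow x p) B)) k := by
    rw [lkth, dif_pos hNh]
    refine cf_lower hNh r (eigSpan hC.1 ((Finset.Ici r).image σ)) ?_ ?_
    · rw [finrank_eigSpan, Finset.card_image_of_injective _ (Equiv.injective σ), Fin.card_Ici]
      omega
    · intro x hx hx1
      set a : ℝ := Complex.re (star x ⬝ᵥ A *ᵥ x) with ha
      set b : ℝ := Complex.re (star x ⬝ᵥ B *ᵥ x) with hb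
      have ha0 : 0 ≤ a := by
        rw [ha, qf_herm hA.1 x, Complex.ofReal_re]
        exact Finset.sum_nonneg fun i _ =>
          mul_nonneg (hA.eigenvalues_nonneg i) (Complex.normSq_nonneg _)
      have hb0 : 0 ≤ b := by
        rw [hb, qf_herm hB.1 x, Complex.ofReal_re]
        exact Finset.sum_nonneg fun i _ =>
          mul_nonneg (hB.eigenvalues_nonneg i) (Complex.normSq_nonneg _)
      have hja : Real.rpow a p ≤ Complex.re (star x ⬝ᵥ mfun (fun x => Real.rpow x p) A *ᵥ x) := by
        rw [hPdef]; exact jensen_qf hA hconv hx1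
      have hjb : Real.rpow b p ≤ Complex.re (star x ⬝ᵥ mfun (fun x => Real.rpow x p) B *ᵥ x) := by
        rw [hQdef]; exact jensen_qf hB hconv hx1
      have hCx : Complex.re (star x ⬝ᵥ ((2:ℂ)⁻¹ • (A + B)) *ᵥ x) = 2⁻¹ * (a + b) :=
        qf_half_smul A B x
      have hge : μ ≤ Complex.re (star x ⬝ᵥ ((2:ℂ)⁻¹ • (A + B)) *ᵥ x) := by
        rw [show (star x ⬝ᵥ ((2:ℂ)⁻¹ • (A + B)) *ᵥ x)
          = star x ⬝ᵥ hC.1.cfc id *ᵥ x by rw [cfc_id_eq]]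
        refine eigSpan_qf_ge hC.1 ?_ hx hx1
        intro i hi
        obtain ⟨j, hj, rfl⟩ := Finset.mem_image.mp hi
        exact Tuple.monotone_sort hC.1.eigenvalues (Finset.mem_Ici.mp hj)
      have hmid : Real.rpow (2⁻¹ * (a + b)) p ≤ 2⁻¹ * Real.rpow a p + 2⁻¹ * Real.rpow b p := by
        have h2 := hconv.2 (Set.mem_Ici.mpr ha0) (Set.mem_Ici.mpr hb0)
          (by norm_num : (0:ℝ) ≤ 2⁻¹) (by norm_num : (0:ℝ) ≤ 2⁻¹) (by norm_num : (2:ℝ)⁻¹ + 2⁻¹ = 1)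
        simpa [smul_eq_mul, mul_add] using h2
      have hNx : Complex.re (star x ⬝ᵥ ((2:ℂ)⁻¹ • (mfun (fun x => Real.rpow x p) A
            + mfun (fun x => Real.rpow x p) B)) *ᵥ x)
          = 2⁻¹ * (Complex.re (star x ⬝ᵥ mfun (fun x => Real.rpow x p) A *ᵥ x)
            + Complex.re (star x ⬝ᵥ mfun (fun x => Real.rpow x p) B *ᵥ x)) :=
        qf_half_smul _ _ x
      have hchain : Real.rpow μ p ≤ Real.rpow (2⁻¹ * (a + b)) p := by
        refine Real.rpow_le_rpow hμ0 ?_ hp0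
        rw [← hCx]; exact hge
      rw [hNx]
      have := hmid
      nlinarith [hja, hjb, hchain, hmid]
  exact le_trans stepA stepB
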